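/- arXiv:math/0209389 — 3 statements merged into one kernel-verified Lean document; each statement's English description precedes it below -/
import Mathlib

section
/- There do not exist integers a, b, c and ε ∈ {1, -1} such that 1 - 2t - (l-2)t² + t³ + t⁴ - t⁵ = (1 + a·t + ε·t²)(1 + b·t + c·t² - ε·t³) as polynomials in ℤ[t], with 1 + a·t + ε·t² irreducible over ℚ, for any integer l. -/
open Polynomial

lemma my_coeff_intCast (i : ℤ) (n : ℕ) :
    ((i : Polynomial ℤ)).coeff n = if n = 0 then i else 0 := by
  rw [← Polynomial.C_eq_intCast, Polynomial.coeff_C]; split <;> simp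

lemma my_coeff_sq (i : ℤ) (n : ℕ) :
    (((i : Polynomial ℤ)) ^ 2 * X ^ 5).coeff n = if n = 5 then i ^ 2 else 0 := by
  rw [← Polynomial.C_eq_intCast, ← Polynomial.C_pow, Polynomial.coeff_C_mul,
    Polynomial.coeff_X_pow]
  split <;> simp

lemma my_not_unit_add : ¬ IsUnit (X + 1 : Polynomial ℚ) := by
  intro h
  have h1 : (X + 1 : Polynomial ℚ).degree = 1 := by
    simpa using Polynomial.degree_X_add_C (1 : ℚ)
  have h2 := Polynomial.degree_eq_zero_of_isUnit h
  rw [h1] at h2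
  exact one_ne_zero h2

lemma my_not_unit_sub : ¬ IsUnit (X - 1 : Polynomial ℚ) := by
  intro h
  have h1 : (X - 1 : Polynomial ℚ).degree = 1 := by
    simpa using Polynomial.degree_X_sub_C (1 : ℚ)
  have h2 := Polynomial.degree_eq_zero_of_isUnit h
  rw [h1] at h2
  exact one_ne_zero h2

theorem stmt4 :
    ¬ ∃ (l a b c ε : ℤ), (ε = 1 ∨ ε = -1) ∧
      (1 - 2 * X - C (l - 2) * X ^ 2 + X ^ 3 + X ^ 4 - X ^ 5 : Polynomial ℤ) =
        (1 + C a * X + C ε * X ^ 2) * (1 + C b * X + C c * X ^ 2 - C ε * X ^ 3) ∧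
      Irreducible (1 + C (a : ℚ) * X + C (ε : ℚ) * X ^ 2 : Polynomial ℚ) := by
  rintro ⟨l, a, b, c, ε, hε, heq, hirr⟩
  ring_nf at heq
  have h1 := congrArg (fun p => Polynomial.coeff p 1) heq
  have h3 := congrArg (fun p => Polynomial.coeff p 3) heq
  have h4 := congrArg (fun p => Polynomial.coeff p 4) heq
  simp [coeff_one, coeff_X, coeff_C, coeff_X_pow, coeff_mul_C,
    coeff_C_mul, my_coeff_intCast, my_coeff_sq, add_mul, sub_mul, neg_mul,
    mul_comm] at h1 h3 h4
  rcases hε with h | h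
  · subst h
    -- h1 : -2 = a + b, h3 : 1 = a*c - 1 + b, h4 : 1 = -a + c
    have ha : a = 2 ∨ a = -2 := by
      have hc : c = a + 1 := by linarith
      have hb : b = -2 - a := by linarith
      subst hc; subst hb
      have ha2 : a ^ 2 = 4 := by linear_combination -h3
      have h2 : (a - 2) * (a + 2) = 0 := by nlinarith
      rcases mul_eq_zero.mp h2 with h' | h'
      · left; linarith
      · right; linarith
    rcases ha with h' | h' <;> subst h'
    · have hfac : (1 + C ((2:ℤ) : ℚ) * X + C ((1:ℤ) : ℚ) * X ^ 2 : Polynomial ℚ)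
          = (X + 1) * (X + 1) := by
        have : ((2:ℤ) : ℚ) = 2 := by norm_num
        rw [this]
        have : ((1:ℤ) : ℚ) = 1 := by norm_num
        rw [this, map_one, map_ofNat]
        ring
      rcases hirr.isUnit_or_isUnit hfac with h'' | h'' <;> exact my_not_unit_add h''
    · have hfac : (1 + C ((-2:ℤ) : ℚ) * X + C ((1:ℤ) : ℚ) * X ^ 2 : Polynomial ℚ)
          = (X - 1) * (X - 1) := by
        have : ((-2:ℤ) : ℚ) = -2 := by norm_num
        rw [this]
        have : ((1:ℤ) : ℚ) = 1 := by norm_num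
        rw [this, map_one, map_neg, map_ofNat]
        ring
      rcases hirr.isUnit_or_isUnit hfac with h'' | h'' <;> exact my_not_unit_sub h''
  · subst h
    have hc : c = a - 1 := by linarith
    have hb : b = -2 - a := by linarith
    subst hc; subst hb
    have ha2 : a ^ 2 = -2 := by linear_combination -h3
    nlinarith [sq_nonneg a]
end

section
/- Suppose integers a, b, c and ε ∈ {1, -1} satisfy 1 - 2t - (l-2)t² + (p-2)t³ + 2t⁴ - t⁵ = (1 + a·t + ε·t²)(1 + b·t + c·t² - ε·t³) in ℤ[t] with integers 1 ≤ p < l. Then ε = -1 and 2a = l - p > 0. -/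
open Polynomial

private lemma cic1 (n : ℤ) : ((n : Polynomial ℤ)).coeff 1 = 0 := by
  rw [← C_eq_intCast, coeff_C]; simp
private lemma cic2 (n : ℤ) : ((n : Polynomial ℤ)).coeff 2 = 0 := by
  rw [← C_eq_intCast, coeff_C]; simp
private lemma cic3 (n : ℤ) : ((n : Polynomial ℤ)).coeff 3 = 0 := by
  rw [← C_eq_intCast, coeff_C]; simp

theorem stmt7 (p l a b c ε : ℤ) (hp : 1 ≤ p) (hpl : p < l) (hε : ε = 1 ∨ ε = -1)
    (h : (1 - 2 * X - C (l - 2) * X ^ 2 + C (p - 2) * X ^ 3 + 2 * X ^ 4 - X ^ 5 : Polynomial ℤ) =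
      (1 + C a * X + C ε * X ^ 2) * (1 + C b * X + C c * X ^ 2 - C ε * X ^ 3)) :
    ε = -1 ∧ 2 * a = l - p ∧ 0 < l - p := by
  have h1 := Polynomial.ext_iff.mp h 1
  have h2 := Polynomial.ext_iff.mp h 2
  have h3 := Polynomial.ext_iff.mp h 3
  have h4 := Polynomial.ext_iff.mp h 4
  simp [coeff_mul, Finset.Nat.sum_antidiagonal_eq_sum_range_succ_mk, Finset.sum_range_succ,
    coeff_add, coeff_sub, coeff_C_mul, coeff_X_pow, coeff_one, coeff_X, coeff_neg, coeff_C,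
    cic1, cic2, cic3] at h1 h2 h3 h4
  have hb : b = -2 - a := by linarith
  subst hb
  rcases hε with rfl | rfl
  · have hc : c = a + 2 := by linarith
    subst hc
    ring_nf at h2 h3
    exfalso; linarith
  · have hc : c = a - 2 := by linarith
    subst hc
    ring_nf at h2 h3
    refine ⟨rfl, by linarith, by omega⟩
end

section
/- Let q ∈ ℤ[t] have non-negative coefficients with q(0) ≥ 1, and let f ∈ ℤ[[t]] be a power series with non-negative coefficients such that q·f is a polynomial. Then f is a polynomial and deg f ≤ deg(q·f). -/
open Polynomial PowerSeries

theorem stmt18 (q : Polynomial ℤ) (f : PowerSeries ℤ) (p : Polynomial ℤ)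
    (hq : ∀ n : ℕ, 0 ≤ q.coeff n) (hq0 : 1 ≤ q.coeff 0)
    (hf : ∀ n : ℕ, 0 ≤ PowerSeries.coeff n f)
    (hqf : (q : PowerSeries ℤ) * f = (p : PowerSeries ℤ)) :
    ∃ pf : Polynomial ℤ, f = (pf : PowerSeries ℤ) ∧ pf.degree ≤ p.degree := by
  have key : ∀ n : ℕ, p.coeff n = 0 → PowerSeries.coeff n f = 0 := by
    intro n hpn
    have h1 : (PowerSeries.coeff n) ((q : PowerSeries ℤ) * f) = 0 := by
      rw [hqf, Polynomial.coeff_coe, hpn]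
    rw [PowerSeries.coeff_mul] at h1
    have h2 : ∀ x ∈ Finset.HasAntidiagonal.antidiagonal n,
        (0:ℤ) ≤ PowerSeries.coeff x.1 (q : PowerSeries ℤ) * PowerSeries.coeff x.2 f := by
      intro x _
      apply mul_nonneg
      · rw [Polynomial.coeff_coe]; exact hq x.1
      · exact hf x.2
    have h3 := (Finset.sum_eq_zero_iff_of_nonneg h2).mp h1 (0, n)
      (by simp [Finset.mem_antidiagonal])
    simp only [Polynomial.coeff_coe] at h3
    have hq0' : q.coeff 0 ≠ 0 := by omega
    rcases mul_eq_zero.mp h3 with h | h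
    · exact absurd h hq0'
    · exact h
  refine ⟨f.trunc (p.natDegree + 1), ?_, ?_⟩
  · ext n
    rw [Polynomial.coeff_coe, PowerSeries.coeff_trunc]
    split_ifs with h
    · rfl
    · refine key n ?_
      exact Polynomial.coeff_eq_zero_of_natDegree_lt (by omega)
  · rw [Polynomial.degree_le_iff_coeff_zero]
    intro m hm
    rw [PowerSeries.coeff_trunc]
    split_ifs with h
    · exact key m (Polynomial.coeff_eq_zero_of_degree_lt hm)
    · rfl
end
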